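/- arXiv:2409.09034 — 2 statements merged into one kernel-verified Lean document; each statement's English description precedes it below -/
import Mathlib

section
/- Let A be a square real matrix, t, λ_i, λ_j real numbers, and β_i, β_j nonzero reals. Then β_i²(A^⊤−(t+λ_j)I)(A−(t+λ_j)I) + β_j²(A^⊤−(t+λ_i)I)(A−(t+λ_i)I) = (√(β_i²+β_j²) A^⊤ − μ I)(√(β_i²+β_j²) A − μ I) + (β_i²β_j²(λ_i−λ_j)²/(β_i²+β_j²)) I, where μ = (β_i²(t+λ_j)+β_j²(t+λ_i))/√(β_i²+β_j²). -/
open Matrix BigOperators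

theorem smul_sub_mul_sub_add_smul_sub_mul_sub {K R : Type*} [Field K] [Ring R] [Algebra K R]
    (x y : R) {a b r p q : K} (hr : r ^ 2 = a + b) (hr0 : r ≠ 0) :
    a • ((x - p • 1) * (y - p • 1)) + b • ((x - q • 1) * (y - q • 1))
      = (r • x - ((a * p + b * q) / r) • 1) * (r • y - ((a * p + b * q) / r) • 1)
        + (a * b * (p - q) ^ 2 / (a + b)) • 1 := by
  rw [← hr]
  simp only [sub_mul, mul_sub, smul_mul_assoc, mul_smul_comm, mul_one, one_mul]
  match_scalars <;> field_simp
  · linear_combination -hr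
  · ring
  · ring
  -- constant terms: (a p + b q)² + a b (p - q)² = (a + b)(a p² + b q²)
  · linear_combination (a * p ^ 2 + b * q ^ 2) * hr

theorem stmt8_general {n : ℕ} (A : Matrix (Fin n) (Fin n) ℝ) (t li lj bi bj : ℝ)
    (hbi : bi ≠ 0) :
    bi ^ 2 • ((Aᵀ - (t + lj) • (1 : Matrix (Fin n) (Fin n) ℝ)) *
        (A - (t + lj) • (1 : Matrix (Fin n) (Fin n) ℝ)))
      + bj ^ 2 • ((Aᵀ - (t + li) • (1 : Matrix (Fin n) (Fin n) ℝ)) *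
        (A - (t + li) • (1 : Matrix (Fin n) (Fin n) ℝ)))
    = (Real.sqrt (bi ^ 2 + bj ^ 2) • Aᵀ
        - ((bi ^ 2 * (t + lj) + bj ^ 2 * (t + li)) / Real.sqrt (bi ^ 2 + bj ^ 2)) •
            (1 : Matrix (Fin n) (Fin n) ℝ)) *
      (Real.sqrt (bi ^ 2 + bj ^ 2) • A
        - ((bi ^ 2 * (t + lj) + bj ^ 2 * (t + li)) / Real.sqrt (bi ^ 2 + bj ^ 2)) •
            (1 : Matrix (Fin n) (Fin n) ℝ))
      + (bi ^ 2 * bj ^ 2 * (li - lj) ^ 2 / (bi ^ 2 + bj ^ 2)) •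
          (1 : Matrix (Fin n) (Fin n) ℝ) := by
  have hpos : 0 < bi ^ 2 + bj ^ 2 := by positivity
  rw [show (li - lj) ^ 2 = (t + lj - (t + li)) ^ 2 by ring]
  exact smul_sub_mul_sub_add_smul_sub_mul_sub Aᵀ A (Real.sq_sqrt hpos.le)
    (Real.sqrt_pos.mpr hpos).ne'

/-- The coupling identity (3.13)/(3.15). -/
theorem stmt8 {n : ℕ} (A : Matrix (Fin n) (Fin n) ℝ) (t li lj bi bj : ℝ)
    (hbi : bi ≠ 0) (hbj : bj ≠ 0) :
    bi ^ 2 • ((Aᵀ - (t + lj) • (1 : Matrix (Fin n) (Fin n) ℝ)) *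
        (A - (t + lj) • (1 : Matrix (Fin n) (Fin n) ℝ)))
      + bj ^ 2 • ((Aᵀ - (t + li) • (1 : Matrix (Fin n) (Fin n) ℝ)) *
        (A - (t + li) • (1 : Matrix (Fin n) (Fin n) ℝ)))
    = (Real.sqrt (bi ^ 2 + bj ^ 2) • Aᵀ
        - ((bi ^ 2 * (t + lj) + bj ^ 2 * (t + li)) / Real.sqrt (bi ^ 2 + bj ^ 2)) •
            (1 : Matrix (Fin n) (Fin n) ℝ)) *
      (Real.sqrt (bi ^ 2 + bj ^ 2) • A
        - ((bi ^ 2 * (t + lj) + bj ^ 2 * (t + li)) / Real.sqrt (bi ^ 2 + bj ^ 2)) •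
            (1 : Matrix (Fin n) (Fin n) ℝ))
      + (bi ^ 2 * bj ^ 2 * (li - lj) ^ 2 / (bi ^ 2 + bj ^ 2)) •
          (1 : Matrix (Fin n) (Fin n) ℝ) :=
  stmt8_general A t li lj bi bj hbi
end

section
/- Let A ∈ ℝ^{n×n}, λ_1,...,λ_n real, β_1,...,β_n nonzero reals, and suppose A − λ_i I is nonsingular for every i. Then det of the block matrix with diagonal blocks (A−λ_iI)(A^⊤−λ_iI)+β_i²I and off-diagonal (i,j) blocks β_iβ_jI equals det( Π_{ℓ=1}^n(A^⊤−λ_ℓI) · Π_{ℓ=1}^n(A−λ_ℓI) + Σ_{i=1}^n β_i² Π_{ℓ≠i}(A^⊤−λ_ℓI) · Π_{ℓ≠i}(A−λ_ℓI) ). -/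
/-!
Write `M_i = A - λ_i I` and `N_i = Aᵀ - λ_i I`. The block matrix is
`blockdiag(M_i N_i) + (β βᵀ) ⊗ I`, a rank-`n` update of an invertible block diagonal matrix, so
the matrix determinant lemma gives `det C = ∏ det (M_i N_i) · det (I + Σ β_i² (M_i N_i)⁻¹)`.
The `M_i` commute with each other, as do the `N_i`, so with `P = ∏ N_ℓ` and `Q = ∏ M_ℓ` the
partial products are `∏_{ℓ≠i} N_ℓ = P N_i⁻¹` and `∏_{ℓ≠i} M_ℓ = M_i⁻¹ Q`. Hence the matrix on
the right factors as `P (I + Σ β_i² (M_i N_i)⁻¹) Q`, which has the same determinant.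
-/

open Matrix
open scoped Kronecker

section ListProd

variable {α M : Type*} [DecidableEq α] [Monoid M] {f : α → M} {l : List α} {a : α}

theorem List.prod_map_eq_mul_prod_map_filter_ne (hf : ∀ a b, Commute (f a) (f b))
    (hl : l.Nodup) (ha : a ∈ l) : (l.map f).prod = f a * ((l.filter (· ≠ a)).map f).prod := by
  have herase : l.erase a = l.filter (· ≠ a) := by
    rw [hl.erase_eq_filter]
    exact List.filter_congr fun x _ => by by_cases h : x = a <;> simp [h]
  rw [← herase, ← List.prod_cons, ← List.map_cons]
  exact ((List.perm_cons_erase ha).map f).prod_eq'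
    (List.pairwise_map.2 (List.pairwise_of_forall fun _ _ => hf _ _))

theorem List.prod_map_eq_prod_map_filter_ne_mul (hf : ∀ a b, Commute (f a) (f b))
    (hl : l.Nodup) (ha : a ∈ l) : (l.map f).prod = ((l.filter (· ≠ a)).map f).prod * f a := by
  rw [List.prod_map_eq_mul_prod_map_filter_ne hf hl ha]
  refine Commute.eq (Commute.list_prod_right _ _ fun x hx => ?_)
  obtain ⟨b, -, rfl⟩ := List.mem_map.1 hx
  exact hf a b

end ListProd

theorem commute_sub_smul_one {R A : Type*} [CommSemiring R] [Ring A] [Algebra R A] (a : A)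
    (r s : R) : Commute (a - r • 1) (a - s • 1) :=
  ((Commute.refl a).sub_right ((Commute.one_right a).smul_right s)).sub_left
    ((Commute.one_left _).smul_left r)

namespace Matrix

variable {m R : Type*} [Fintype m] [DecidableEq m] [CommRing R]

theorem det_list_prod_map_finRange {n : ℕ} (f : Fin n → Matrix m m R) :
    ((List.finRange n).map f).prod.det = ∏ i, (f i).det := by
  rw [Fin.prod_univ_def, ← coe_detMonoidHom, map_list_prod, List.map_map]
  rfl

theorem prod_map_filter_ne_eq_inv_mul {α : Type*} [DecidableEq α] {f : α → Matrix m m R}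
    (hf : ∀ a b, Commute (f a) (f b)) {l : List α} (hl : l.Nodup) {a : α} (ha : a ∈ l)
    (hfa : IsUnit (f a).det) : ((l.filter (· ≠ a)).map f).prod = (f a)⁻¹ * (l.map f).prod := by
  rw [List.prod_map_eq_mul_prod_map_filter_ne hf hl ha]
  exact (nonsing_inv_mul_cancel_left _ _ hfa).symm

theorem prod_map_filter_ne_eq_mul_inv {α : Type*} [DecidableEq α] {f : α → Matrix m m R}
    (hf : ∀ a b, Commute (f a) (f b)) {l : List α} (hl : l.Nodup) {a : α} (ha : a ∈ l)
    (hfa : IsUnit (f a).det) : ((l.filter (· ≠ a)).map f).prod = (l.map f).prod * (f a)⁻¹ := by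
  rw [List.prod_map_eq_prod_map_filter_ne_mul hf hl ha]
  exact (mul_nonsing_inv_cancel_right _ _ hfa).symm

theorem det_prod_mul_prod_add_sum_smul_prod_filter_ne {n : ℕ} {M N : Fin n → Matrix m m R}
    (hMc : ∀ a b, Commute (M a) (M b)) (hNc : ∀ a b, Commute (N a) (N b))
    (hM : ∀ i, IsUnit (M i).det) (hN : ∀ i, IsUnit (N i).det) (c : Fin n → R) :
    (((List.finRange n).map N).prod * ((List.finRange n).map M).prod
      + ∑ i, c i • ((((List.finRange n).filter (· ≠ i)).map N).prod *
        (((List.finRange n).filter (· ≠ i)).map M).prod)).det =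
      (∏ i, (M i * N i).det) * (1 + ∑ i, c i • (M i * N i)⁻¹).det := by
  set P := ((List.finRange n).map N).prod
  set Q := ((List.finRange n).map M).prod
  have hfactor : ∀ i, (((List.finRange n).filter (· ≠ i)).map N).prod *
      (((List.finRange n).filter (· ≠ i)).map M).prod = P * (M i * N i)⁻¹ * Q := fun i => by
    rw [prod_map_filter_ne_eq_mul_inv hNc (List.nodup_finRange n) (List.mem_finRange i) (hN i),
      prod_map_filter_ne_eq_inv_mul hMc (List.nodup_finRange n) (List.mem_finRange i) (hM i),
      Matrix.mul_inv_rev]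
    simp only [P, Q, Matrix.mul_assoc]
  have hsum : P * Q + ∑ i, c i • (P * (M i * N i)⁻¹ * Q) =
      P * (1 + ∑ i, c i • (M i * N i)⁻¹) * Q := by
    simp only [mul_add, add_mul, mul_one, Finset.mul_sum, Finset.sum_mul, mul_smul_comm,
      smul_mul_assoc]
  simp only [hfactor]
  rw [hsum, det_mul, det_mul, det_list_prod_map_finRange, det_list_prod_map_finRange]
  simp only [det_mul, Finset.prod_mul_distrib]
  ring

variable {ι : Type*} [Fintype ι] [DecidableEq ι]

theorem blockDiagonal_inv {d : ι → Matrix m m R} (hd : ∀ i, IsUnit (d i).det) :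
    (blockDiagonal d)⁻¹ = blockDiagonal fun i => (d i)⁻¹ := by
  refine inv_eq_left_inv ?_
  rw [← blockDiagonal_mul, ← blockDiagonal_one]
  exact congrArg blockDiagonal (funext fun i => nonsing_inv_mul _ (hd i))

theorem det_blockDiagonal_add_vecMulVec_kronecker_one {D : ι → Matrix m m R}
    (hD : ∀ i, IsUnit (D i).det) (β : ι → R) :
    ((blockDiagonal D).submatrix Prod.swap Prod.swap + vecMulVec β β ⊗ₖ (1 : Matrix m m R)).det =
      (∏ i, (D i).det) * (1 + ∑ i, β i ^ 2 • (D i)⁻¹).det := by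
  let U : Matrix (m × ι) m R := of fun p l => β p.2 * (1 : Matrix m m R) p.1 l
  let V : Matrix m (m × ι) R := of fun k q => β q.2 * (1 : Matrix m m R) k q.1
  have hsplit : (blockDiagonal D).submatrix Prod.swap Prod.swap
      + vecMulVec β β ⊗ₖ (1 : Matrix m m R) =
      (blockDiagonal D + U * V).submatrix (Equiv.prodComm ι m) (Equiv.prodComm ι m) := by
    ext ⟨i, k⟩ ⟨j, l⟩
    simp [U, V, mul_apply, one_apply, vecMulVec_apply]
  have hVEU : V * blockDiagonal (fun i => (D i)⁻¹) * U = ∑ i, β i ^ 2 • (D i)⁻¹ := by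
    ext k l
    simp only [U, V, mul_apply, of_apply, Fintype.sum_prod_type, one_apply, blockDiagonal_apply,
      mul_ite, ite_mul, mul_one, mul_zero, zero_mul, Finset.sum_ite_eq, Finset.sum_ite_eq',
      Finset.sum_ite_irrel, Finset.sum_const_zero, Finset.mem_univ, if_true, sum_apply,
      smul_apply, smul_eq_mul]
    exact Finset.sum_congr rfl fun i _ => by ring
  have hB : IsUnit (blockDiagonal D).det := by
    rw [det_blockDiagonal]
    exact IsUnit.prod_univ_iff.2 hD
  rw [hsplit, det_submatrix_equiv_self, det_add_mul _ _ hB, blockDiagonal_inv hD, hVEU,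
    det_blockDiagonal]

end Matrix

theorem stmt12_general {n : ℕ} (A : Matrix (Fin n) (Fin n) ℝ) (lam β : Fin n → ℝ)
    (hinv : ∀ i, IsUnit (A - lam i • (1 : Matrix (Fin n) (Fin n) ℝ)))
    (C : Matrix (Fin n × Fin n) (Fin n × Fin n) ℝ)
    (hC : ∀ i k j l : Fin n, C (i, k) (j, l) =
      if i = j then
        ((A - lam i • (1 : Matrix (Fin n) (Fin n) ℝ)) *
          (Aᵀ - lam i • (1 : Matrix (Fin n) (Fin n) ℝ))
          + (β i) ^ 2 • (1 : Matrix (Fin n) (Fin n) ℝ)) k l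
      else β i * β j * (if k = l then 1 else 0)) :
    C.det =
      ( ((List.finRange n).map
            (fun ℓ => Aᵀ - lam ℓ • (1 : Matrix (Fin n) (Fin n) ℝ))).prod *
        ((List.finRange n).map
            (fun ℓ => A - lam ℓ • (1 : Matrix (Fin n) (Fin n) ℝ))).prod
        + ∑ i : Fin n, (β i) ^ 2 •
            ( (((List.finRange n).filter (fun ℓ => ℓ ≠ i)).map
                  (fun ℓ => Aᵀ - lam ℓ • (1 : Matrix (Fin n) (Fin n) ℝ))).prod *
              (((List.finRange n).filter (fun ℓ => ℓ ≠ i)).map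
                  (fun ℓ => A - lam ℓ • (1 : Matrix (Fin n) (Fin n) ℝ))).prod ) ).det := by
  set M : Fin n → Matrix (Fin n) (Fin n) ℝ := fun ℓ => A - lam ℓ • 1
  set N : Fin n → Matrix (Fin n) (Fin n) ℝ := fun ℓ => Aᵀ - lam ℓ • 1
  have hM : ∀ i, IsUnit (M i).det := fun i => (isUnit_iff_isUnit_det _).1 (hinv i)
  have hN : ∀ i, IsUnit (N i).det := fun i => by
    have hNM : N i = (M i)ᵀ := by simp [M, N, transpose_sub]
    rw [hNM, det_transpose]
    exact hM i
  have hMN : ∀ i, IsUnit (M i * N i).det := fun i => by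
    rw [det_mul]
    exact (hM i).mul (hN i)
  have hC' : C = (blockDiagonal fun i => M i * N i).submatrix Prod.swap Prod.swap
      + vecMulVec β β ⊗ₖ 1 := by
    ext ⟨i, k⟩ ⟨j, l⟩
    rw [hC]
    simp only [Matrix.add_apply, submatrix_apply, Prod.swap_prod_mk, blockDiagonal_apply,
      kroneckerMap_apply, vecMulVec_apply, one_apply, Matrix.smul_apply]
    split_ifs <;> simp_all [M, N, sq]
  rw [hC', det_blockDiagonal_add_vecMulVec_kronecker_one hMN,
    det_prod_mul_prod_add_sum_smul_prod_filter_ne (fun _ _ => commute_sub_smul_one A _ _)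
      (fun _ _ => commute_sub_smul_one Aᵀ _ _) hM hN]

/-- Schur-complement evaluation of `det C` when every `A − λ_i I` is nonsingular. -/
theorem stmt12 {n : ℕ} (A : Matrix (Fin n) (Fin n) ℝ) (lam β : Fin n → ℝ)
    (hβ : ∀ i, β i ≠ 0)
    (hinv : ∀ i, IsUnit (A - lam i • (1 : Matrix (Fin n) (Fin n) ℝ)))
    (C : Matrix (Fin n × Fin n) (Fin n × Fin n) ℝ)
    (hC : ∀ i k j l : Fin n, C (i, k) (j, l) =
      if i = j then
        ((A - lam i • (1 : Matrix (Fin n) (Fin n) ℝ)) *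
          (Aᵀ - lam i • (1 : Matrix (Fin n) (Fin n) ℝ))
          + (β i) ^ 2 • (1 : Matrix (Fin n) (Fin n) ℝ)) k l
      else β i * β j * (if k = l then 1 else 0)) :
    C.det =
      ( ((List.finRange n).map
            (fun ℓ => Aᵀ - lam ℓ • (1 : Matrix (Fin n) (Fin n) ℝ))).prod *
        ((List.finRange n).map
            (fun ℓ => A - lam ℓ • (1 : Matrix (Fin n) (Fin n) ℝ))).prod
        + ∑ i : Fin n, (β i) ^ 2 •
            ( (((List.finRange n).filter (fun ℓ => ℓ ≠ i)).map
                  (fun ℓ => Aᵀ - lam ℓ • (1 : Matrix (Fin n) (Fin n) ℝ))).prod *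
              (((List.finRange n).filter (fun ℓ => ℓ ≠ i)).map
                  (fun ℓ => A - lam ℓ • (1 : Matrix (Fin n) (Fin n) ℝ))).prod ) ).det :=
  stmt12_general A lam β hinv C hC
end
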